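/- Let X be a finite set of points in Euclidean space ℝ^d and let Z be a nonempty finite subset of ℝ^d with φ_X(Z) > 0. Then there exists a point x ∈ X with d(x, conv(Z)) > 0, and for any such point, φ_X(Z ∪ {x}) ≤ φ_X(Z) − d(x, conv(Z))² < φ_X(Z); hence a step of the AA++ initialization decreases the objective with probability one. -/

import Mathlib

/-! Enlarging the archetype set only enlarges the hull, so no point moves farther from it, and the
chosen point `x` itself now lies in the hull, so its whole term `d(x, conv Z)²` disappears from the
objective. -/

open Metric

theorem Finset.sum_le_sum_sub_of_le_of_eq_zero {ι β : Type*} [AddCommGroup β] [PartialOrder β]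
    [IsOrderedAddMonoid β] {s : Finset ι} {f g : ι → β} {i : ι} (hi : i ∈ s)
    (hgf : ∀ j ∈ s, g j ≤ f j) (hgi : g i = 0) :
    ∑ j ∈ s, g j ≤ ∑ j ∈ s, f j - f i := by
  classical
  rw [← Finset.add_sum_erase s g hi, ← Finset.add_sum_erase s f hi, hgi, zero_add,
    add_sub_cancel_left]
  exact Finset.sum_le_sum fun j hj => hgf j (Finset.mem_of_mem_erase hj)

theorem Finset.exists_infDist_pos_of_sum_infDist_sq_pos {α : Type*} [PseudoMetricSpace α]
    {X : Finset α} {s : Set α} (h : 0 < ∑ y ∈ X, infDist y s ^ 2) :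
    ∃ x ∈ X, 0 < infDist x s := by
  obtain ⟨x, hx, hpos⟩ :=
    Finset.exists_lt_of_sum_lt (f := fun _ => 0) (g := fun y => infDist y s ^ 2) (by simpa using h)
  exact ⟨x, hx, infDist_nonneg.lt_of_ne' (sq_pos_iff.1 hpos)⟩

theorem Finset.sum_infDist_sq_le_sub_of_subset {α : Type*} [PseudoMetricSpace α]
    (X : Finset α) {s t : Set α} (hst : s ⊆ t) (hs : s.Nonempty) {x : α} (hxX : x ∈ X)
    (hxt : x ∈ t) :
    ∑ y ∈ X, infDist y t ^ 2 ≤ ∑ y ∈ X, infDist y s ^ 2 - infDist x s ^ 2 :=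
  Finset.sum_le_sum_sub_of_le_of_eq_zero hxX
    (fun y _ => pow_le_pow_left₀ infDist_nonneg (infDist_le_infDist_of_subset hst hs) 2)
    (by rw [infDist_zero_of_mem hxt, sq, zero_mul])

/-- If φ_X(Z) > 0 then some x ∈ X has d(x, conv(Z)) > 0, and for any such
point, φ_X(Z ∪ {x}) ≤ φ_X(Z) − d(x, conv(Z))² < φ_X(Z); hence an AA++ step decreases the
objective with probability one. -/
theorem aapp_step_decreases_with_probability_one {d : ℕ}
    (X Z : Finset (EuclideanSpace ℝ (Fin d))) (hZ : Z.Nonempty)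
    (hφ : 0 < ∑ y ∈ X, (Metric.infDist y
        (convexHull ℝ (Z : Set (EuclideanSpace ℝ (Fin d))))) ^ 2) :
    (∃ x ∈ X, 0 < Metric.infDist x (convexHull ℝ (Z : Set (EuclideanSpace ℝ (Fin d)))))
    ∧ ∀ x ∈ X,
        0 < Metric.infDist x (convexHull ℝ (Z : Set (EuclideanSpace ℝ (Fin d)))) →
        (∑ y ∈ X, (Metric.infDist y
              (convexHull ℝ (insert x (Z : Set (EuclideanSpace ℝ (Fin d)))))) ^ 2
            ≤ (∑ y ∈ X, (Metric.infDist y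
                (convexHull ℝ (Z : Set (EuclideanSpace ℝ (Fin d))))) ^ 2)
              - (Metric.infDist x (convexHull ℝ (Z : Set (EuclideanSpace ℝ (Fin d))))) ^ 2)
        ∧ ∑ y ∈ X, (Metric.infDist y
              (convexHull ℝ (insert x (Z : Set (EuclideanSpace ℝ (Fin d)))))) ^ 2
            < ∑ y ∈ X, (Metric.infDist y
                (convexHull ℝ (Z : Set (EuclideanSpace ℝ (Fin d))))) ^ 2 := by
  refine ⟨Finset.exists_infDist_pos_of_sum_infDist_sq_pos hφ, fun x hxX hx => ?_⟩
  have hdecrease := X.sum_infDist_sq_le_sub_of_subset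
    (convexHull_mono (Set.subset_insert x _)) (Finset.coe_nonempty.2 hZ).convexHull hxX
    (subset_convexHull ℝ _ (Set.mem_insert x _))
  exact ⟨hdecrease, hdecrease.trans_lt (sub_lt_self _ (pow_pos hx 2))⟩
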